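/- Let L : H → G be bounded linear, bounded below, with ‖L‖ ≤ 1, let B be strictly positive on G, set κ = ‖B‖·‖B⁻¹‖ and ρ = (1 + √κ)². Then L* ∘ B ∘ L ≼ ρ (L* ▸ B), where L* ▸ B = (L* ∘ B⁻¹ ∘ L)⁻¹ is the parallel composition. -/

import Mathlib

open ContinuousLinearMap MeasureTheory

noncomputable section

variable {E : Type*} [NormedAddCommGroup E] [InnerProductSpace ℝ E] [CompleteSpace E]
variable {H G : Type*} [NormedAddCommGroup H] [InnerProductSpace ℝ H] [CompleteSpace H]
  [NormedAddCommGroup G] [InnerProductSpace ℝ G] [CompleteSpace G]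

/-- Löwner partial order: `A ≼ B` iff `B - A` is a positive operator. -/
def Loewner (A B : E →L[ℝ] E) : Prop := (B - A).IsPositive

/-- Strictly positive operators: `α • Id ≼ A` for some `α > 0`. -/
def StrictlyPos (A : E →L[ℝ] E) : Prop :=
  IsSelfAdjoint A ∧ ∃ α : ℝ, 0 < α ∧ Loewner (α • (1 : E →L[ℝ] E)) A

/-- Bounded below linear operator. -/
def BoundedBelow (L : H →L[ℝ] G) : Prop := ∃ β : ℝ, 0 < β ∧ ∀ x : H, β * ‖x‖ ≤ ‖L x‖

/-- Resolvent cocomposition `L ⊡_γ B = L* ∘ (B⁻¹ + γ(Id − L L*))⁻¹ ∘ L`. -/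
def rcc (L : H →L[ℝ] G) (γ : ℝ) (B : G →L[ℝ] G) : H →L[ℝ] H :=
  (adjoint L) ∘L (Ring.inverse (Ring.inverse B + γ • ((1 : G →L[ℝ] G) - L ∘L adjoint L))) ∘L L

/-- Resolvent composition `L ⊙_γ B = (L ⊡_{1/γ} B⁻¹)⁻¹`. -/
def rc (L : H →L[ℝ] G) (γ : ℝ) (B : G →L[ℝ] G) : H →L[ℝ] H :=
  Ring.inverse (rcc L (1/γ) (Ring.inverse B))

/-- Parallel composition `L* ▸ B = (L* ∘ B⁻¹ ∘ L)⁻¹`. -/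
def parallelComp (L : H →L[ℝ] G) (B : G →L[ℝ] G) : H →L[ℝ] H :=
  Ring.inverse ((adjoint L) ∘L (Ring.inverse B) ∘L L)

/-- `g(A,B) = inf {λ > 0 : A ≼ λ B}`. -/
def gThomp (A B : E →L[ℝ] E) : ℝ := sInf {l : ℝ | 0 < l ∧ Loewner A (l • B)}

/-- Thompson metric. -/
def dThomp (A B : E →L[ℝ] E) : ℝ := Real.log (max (gThomp A B) (gThomp B A))

/-- The (unique) positive square root of a positive operator. -/
def opSqrt (A : E →L[ℝ] E) : E →L[ℝ] E :=
  letI := Classical.propDecidable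
  if h : ∃ S : E →L[ℝ] E, S.IsPositive ∧ S * S = A then h.choose else 0

/-- Real power `A^t` of a strictly positive operator, `t ∈ (0,1)`, via the
Balakrishnan integral formula `A^t = (sin (π t)/π) ∫₀^∞ s^{t-1} A (A + s)⁻¹ ds`. -/
def opRpow (A : E →L[ℝ] E) (t : ℝ) : E →L[ℝ] E :=
  (Real.sin (Real.pi * t) / Real.pi) •
    ∫ s in Set.Ioi (0 : ℝ), s ^ (t - 1) • (A * Ring.inverse (A + s • (1 : E →L[ℝ] E)))

/-- Geometric mean `A # B = A^{1/2} (A^{-1/2} B A^{-1/2})^{1/2} A^{1/2}`. -/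
def geomMean (A B : E →L[ℝ] E) : E →L[ℝ] E :=
  opSqrt A * opSqrt (Ring.inverse (opSqrt A) * B * Ring.inverse (opSqrt A)) * opSqrt A

/-- `t`-weighted geometric mean `A #_t B = A^{1/2} (A^{-1/2} B A^{-1/2})^t A^{1/2}`. -/
def wGeomMean (t : ℝ) (A B : E →L[ℝ] E) : E →L[ℝ] E :=
  opSqrt A * opRpow (Ring.inverse (opSqrt A) * B * Ring.inverse (opSqrt A)) t * opSqrt A

/-!
Let `m = ‖B⁻¹‖⁻¹` and `M = ‖B‖`, so that `m ≤ B ≤ M`. Kantorovich's inequality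
`B + m M B⁻¹ ≤ m + M`, conjugated by `L` with `‖L‖ ≤ 1`, gives `L* B L ≤ (m + M) - m M A` for
`A = L* B⁻¹ L`, which is invertible because `L` is bounded below. Completing the square,
`0 ≤ (2 m M A^{1/2} - (m + M) A^{-1/2})²`, bounds the right-hand side by
`(m + M)² / (4 m M) • A⁻¹`, and `(m + M)² / (4 m M) = (1 + κ)² / (4 κ) ≤ (1 + √κ)²` since `κ ≥ 1`.
-/

open scoped RealInnerProductSpace

theorem one_le_norm_mul_norm_inverse {R : Type*} [NormedRing R] [NormOneClass R] [Nontrivial R]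
    {a : R} (ha : IsUnit a) : 1 ≤ ‖a‖ * ‖Ring.inverse a‖ :=
  calc (1 : ℝ) = ‖a * Ring.inverse a‖ := by rw [Ring.mul_inverse_cancel a ha, norm_one]
    _ ≤ ‖a‖ * ‖Ring.inverse a‖ := norm_mul_le _ _

theorem one_add_sq_le_four_mul_mul_one_add_sqrt_sq {κ : ℝ} (hκ : 1 ≤ κ) :
    (1 + κ) ^ 2 ≤ 4 * κ * (1 + √κ) ^ 2 := by
  have hs : 1 ≤ √κ := Real.one_le_sqrt.mpr hκ
  have hκs : √κ ^ 2 = κ := Real.sq_sqrt (by linarith)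
  calc (1 + κ) ^ 2 = (1 + √κ ^ 2) ^ 2 := by rw [hκs]
    _ ≤ 4 * √κ ^ 2 * (1 + √κ) ^ 2 := by
        nlinarith [mul_nonneg (by nlinarith : 0 ≤ √κ ^ 2 + 2 * √κ - 1)
          (by positivity : 0 ≤ 3 * √κ ^ 2 + 2 * √κ + 1)]
    _ = 4 * κ * (1 + √κ) ^ 2 := by rw [hκs]

namespace ContinuousLinearMap

variable {V : Type*} [NormedAddCommGroup V] [InnerProductSpace ℝ V]

theorem inner_apply_self_le_norm_mul_sq (T : V →L[ℝ] V) (x : V) :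
    ⟪T x, x⟫ ≤ ‖T‖ * ‖x‖ ^ 2 :=
  calc ⟪T x, x⟫ ≤ ‖T x‖ * ‖x‖ := real_inner_le_norm _ _
    _ ≤ ‖T‖ * ‖x‖ * ‖x‖ := by gcongr; exact T.le_opNorm x
    _ = ‖T‖ * ‖x‖ ^ 2 := by ring

theorem apply_inverse_apply {T : V →L[ℝ] V} (hT : IsUnit T) (x : V) :
    T (Ring.inverse T x) = x := by
  simpa using DFunLike.congr_fun (Ring.mul_inverse_cancel T hT) x

theorem inverse_apply_apply {T : V →L[ℝ] V} (hT : IsUnit T) (x : V) :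
    Ring.inverse T (T x) = x := by
  simpa using DFunLike.congr_fun (Ring.inverse_mul_cancel T hT) x

namespace IsPositive

variable {T : V →L[ℝ] V}

theorem inner_sq_le_inner_mul_inner (hT : T.IsPositive) (x y : V) :
    ⟪T x, y⟫ ^ 2 ≤ ⟪T x, x⟫ * ⟪T y, y⟫ :=
  LinearMap.BilinForm.apply_sq_le_of_symm ((innerₗ V).comp (T : V →ₗ[ℝ] V))
    hT.inner_nonneg_left
    ⟨fun x y => by simp [hT.inner_left_eq_inner_right y x, real_inner_comm]⟩ x y

theorem norm_apply_sq_le_of_inner_le (hT : T.IsPositive) {d : ℝ}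
    (hd : ∀ x, ⟪T x, x⟫ ≤ d * ‖x‖ ^ 2) (x : V) : ‖T x‖ ^ 2 ≤ d * ⟪T x, x⟫ := by
  have hcs := hT.inner_sq_le_inner_mul_inner x (T x)
  rw [real_inner_self_eq_norm_sq] at hcs
  have hcs' : (‖T x‖ ^ 2) ^ 2 ≤ (d * ⟪T x, x⟫) * ‖T x‖ ^ 2 := by
    nlinarith [mul_le_mul_of_nonneg_left (hd (T x)) (hT.inner_nonneg_left x)]
  rcases (sq_nonneg ‖T x‖).eq_or_lt with h0 | hpos
  · have hTx : T x = 0 := by simpa using h0.symm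
    simp [hTx]
  · exact le_of_mul_le_mul_right (by nlinarith) hpos

theorem inverse (hT : T.IsPositive) (hu : IsUnit T) : (Ring.inverse T).IsPositive := by
  refine (isPositive_iff _).2 ⟨fun x y => ?_, fun x => ?_⟩
  · simp only [coe_coe]
    calc ⟪Ring.inverse T x, y⟫ = ⟪Ring.inverse T x, T (Ring.inverse T y)⟫ := by
          rw [apply_inverse_apply hu]
      _ = ⟪x, Ring.inverse T y⟫ := by
          rw [← hT.inner_left_eq_inner_right, apply_inverse_apply hu]
  · simpa [apply_inverse_apply hu, real_inner_comm] using
      hT.inner_nonneg_left (Ring.inverse T x)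

theorem two_mul_mul_mul_norm_sq_le (hT : T.IsPositive) (hu : IsUnit T) (s t : ℝ) (x : V) :
    2 * s * t * ‖x‖ ^ 2 ≤ s ^ 2 * ⟪T x, x⟫ + t ^ 2 * ⟪Ring.inverse T x, x⟫ := by
  have h := hT.inner_nonneg_left (s • x - t • Ring.inverse T x)
  have e1 : ⟪T (Ring.inverse T x), x⟫ = ‖x‖ ^ 2 := by
    rw [apply_inverse_apply hu, real_inner_self_eq_norm_sq]
  have e2 : ⟪T x, Ring.inverse T x⟫ = ‖x‖ ^ 2 := by
    rw [hT.inner_left_eq_inner_right, apply_inverse_apply hu, real_inner_self_eq_norm_sq]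
  have e3 : ⟪T (Ring.inverse T x), Ring.inverse T x⟫ = ⟪Ring.inverse T x, x⟫ := by
    rw [apply_inverse_apply hu, real_inner_comm]
  simp only [map_sub, map_smul, inner_sub_left, inner_sub_right, real_inner_smul_left,
    real_inner_smul_right, e1, e2, e3] at h
  nlinarith [h]

theorem norm_sq_le_norm_inverse_mul_inner (hT : T.IsPositive) (hu : IsUnit T) (x : V) :
    ‖x‖ ^ 2 ≤ ‖Ring.inverse T‖ * ⟪T x, x⟫ := by
  set c := ‖Ring.inverse T‖
  have hx : ‖x‖ ≤ c * ‖T x‖ := by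
    simpa [inverse_apply_apply hu] using (Ring.inverse T).le_opNorm (T x)
  have key : c * ‖x‖ ^ 2 ≤ c * (c * ⟪T x, x⟫) := by
    nlinarith [hT.two_mul_mul_mul_norm_sq_le hu c 1 x,
      (Ring.inverse T).inner_apply_self_le_norm_mul_sq x]
  have hc0 : 0 ≤ c := norm_nonneg _
  rcases hc0.eq_or_lt with hc | hc
  · rw [← hc, zero_mul] at hx
    simp [norm_le_zero_iff.mp hx]
  · exact le_of_mul_le_mul_left key hc

/-- With `v = T w` and `C = T - m`, the defect is
`⟪(M - T) C w, C w⟫ + m ((M - m) ⟪C w, w⟫ - ‖C w‖²)`, and `‖C w‖² ≤ (M - m) ⟪C w, w⟫`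
because `0 ≤ C ≤ M - m`. -/
theorem inner_add_mul_inner_inverse_le (hT : T.IsPositive) (hu : IsUnit T) {m M : ℝ}
    (hm0 : 0 ≤ m) (hm : ∀ v, m * ‖v‖ ^ 2 ≤ ⟪T v, v⟫) (hM : ∀ v, ⟪T v, v⟫ ≤ M * ‖v‖ ^ 2)
    (v : V) : ⟪T v, v⟫ + m * M * ⟪Ring.inverse T v, v⟫ ≤ (m + M) * ‖v‖ ^ 2 := by
  obtain ⟨w, rfl⟩ : ∃ w, T w = v := ⟨_, apply_inverse_apply hu v⟩
  set C := T - m • (1 : V →L[ℝ] V)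
  have hC : ∀ x, C x = T x - m • x := fun x => rfl
  have hCpos : C.IsPositive := by
    refine (isPositive_iff _).2 ⟨fun x y => ?_, fun x => ?_⟩
    · simp only [coe_coe, hC, inner_sub_left, inner_sub_right, real_inner_smul_left,
        real_inner_smul_right, hT.inner_left_eq_inner_right]
    · simpa [hC, inner_sub_left, real_inner_smul_left, real_inner_self_eq_norm_sq] using hm x
  have hCd : ∀ x, ⟪C x, x⟫ ≤ (M - m) * ‖x‖ ^ 2 := fun x => by
    simp only [hC, inner_sub_left, real_inner_smul_left, real_inner_self_eq_norm_sq]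
    nlinarith [hM x]
  have hCsq := hCpos.norm_apply_sq_le_of_inner_le hCd w
  have hMCw := hM (C w)
  rw [← real_inner_self_eq_norm_sq] at hCsq hMCw ⊢
  have hsym : ⟪T (T w), w⟫ = ⟪T w, T w⟫ := hT.inner_left_eq_inner_right _ _
  simp only [hC, map_sub, map_smul, inner_sub_left, inner_sub_right, real_inner_smul_left,
    real_inner_smul_right, hsym, inverse_apply_apply hu, real_inner_comm w (T w)]
    at hCsq hMCw ⊢
  nlinarith [mul_le_mul_of_nonneg_left hCsq hm0]

theorem norm_inverse_mul_inner_add_norm_mul_inner_inverse_le [Nontrivial V]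
    (hT : T.IsPositive) (hu : IsUnit T) (v : V) :
    ‖Ring.inverse T‖ * ⟪T v, v⟫ + ‖T‖ * ⟪Ring.inverse T v, v⟫
      ≤ (1 + ‖T‖ * ‖Ring.inverse T‖) * ‖v‖ ^ 2 := by
  set c := ‖Ring.inverse T‖
  have hc : 0 < c := norm_pos_iff.2 hu.ringInverse.ne_zero
  have hm : ∀ x, c⁻¹ * ‖x‖ ^ 2 ≤ ⟪T x, x⟫ := fun x => by
    rw [inv_mul_le_iff₀ hc]
    exact hT.norm_sq_le_norm_inverse_mul_inner hu x
  have h := hT.inner_add_mul_inner_inverse_le hu (inv_nonneg.2 hc.le) hm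
    T.inner_apply_self_le_norm_mul_sq v
  have h' := mul_le_mul_of_nonneg_left h hc.le
  field_simp at h'
  linarith

theorem norm_inverse_mul_inner_adjoint_conj_add_le [Nontrivial G] {T : G →L[ℝ] G}
    (hT : T.IsPositive) (hu : IsUnit T) {L : H →L[ℝ] G} (hL1 : ‖L‖ ≤ 1) (x : H) :
    ‖Ring.inverse T‖ * ⟪(adjoint L ∘L T ∘L L) x, x⟫
        + ‖T‖ * ⟪(adjoint L ∘L Ring.inverse T ∘L L) x, x⟫
      ≤ (1 + ‖T‖ * ‖Ring.inverse T‖) * ‖x‖ ^ 2 := by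
  have hLx : ‖L x‖ ^ 2 ≤ ‖x‖ ^ 2 := by
    gcongr
    exact (L.le_opNorm x).trans (mul_le_of_le_one_left (norm_nonneg x) hL1)
  simp only [comp_apply, adjoint_inner_left]
  calc _ ≤ (1 + ‖T‖ * ‖Ring.inverse T‖) * ‖L x‖ ^ 2 :=
        hT.norm_inverse_mul_inner_add_norm_mul_inner_inverse_le hu (L x)
    _ ≤ (1 + ‖T‖ * ‖Ring.inverse T‖) * ‖x‖ ^ 2 := by gcongr

end IsPositive

end ContinuousLinearMap

theorem loewner_of_inner_le {A B : E →L[ℝ] E} (hA : IsSelfAdjoint A) (hB : IsSelfAdjoint B)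
    (h : ∀ x, ⟪A x, x⟫ ≤ ⟪B x, x⟫) : Loewner A B :=
  (isPositive_iff' _).2 ⟨hB.sub hA, fun x => by simpa [inner_sub_left] using h x⟩

namespace StrictlyPos

variable {A : E →L[ℝ] E}

theorem exists_pos_mul_norm_sq_le_inner (hA : StrictlyPos A) :
    ∃ α, 0 < α ∧ ∀ x, α * ‖x‖ ^ 2 ≤ ⟪A x, x⟫ := by
  obtain ⟨-, α, hα, hle⟩ := hA
  refine ⟨α, hα, fun x => ?_⟩
  simpa [inner_sub_left, real_inner_smul_left, real_inner_self_eq_norm_sq] using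
    hle.inner_nonneg_left x

theorem of_pos_mul_norm_sq_le_inner (hA : IsSelfAdjoint A) {α : ℝ} (hα : 0 < α)
    (h : ∀ x, α * ‖x‖ ^ 2 ≤ ⟪A x, x⟫) : StrictlyPos A :=
  ⟨hA, α, hα, loewner_of_inner_le ((IsSelfAdjoint.all α).smul (IsSelfAdjoint.one _)) hA
    fun x => by simpa [real_inner_smul_left, real_inner_self_eq_norm_sq] using h x⟩

theorem isPositive (hA : StrictlyPos A) : A.IsPositive := by
  obtain ⟨α, hα, h⟩ := hA.exists_pos_mul_norm_sq_le_inner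
  exact (isPositive_iff' _).2
    ⟨hA.1, fun x => (by positivity : 0 ≤ α * ‖x‖ ^ 2).trans (h x)⟩

theorem isUnit (hA : StrictlyPos A) : IsUnit A := by
  obtain ⟨α, hα, h⟩ := hA.exists_pos_mul_norm_sq_le_inner
  refine isUnit_of_forall_le_norm_inner_map A (c := ⟨α, hα.le⟩) hα fun x => ?_
  rw [Real.norm_eq_abs, mul_comm]
  exact (h x).trans (le_abs_self _)

theorem inverse [Nontrivial E] (hA : StrictlyPos A) : StrictlyPos (Ring.inverse A) := by
  have hpos := hA.isPositive.inverse hA.isUnit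
  have hnorm : 0 < ‖A‖ := norm_pos_iff.2 hA.isUnit.ne_zero
  refine of_pos_mul_norm_sq_le_inner hpos.isSelfAdjoint (inv_pos.2 hnorm) fun x => ?_
  rw [inv_mul_le_iff₀ hnorm]
  simpa [Ring.inverse_inverse hA.isUnit] using
    hpos.norm_sq_le_norm_inverse_mul_inner hA.isUnit.ringInverse x

theorem adjoint_conj (hA : StrictlyPos A) {L : H →L[ℝ] E} (hL : BoundedBelow L) :
    StrictlyPos (adjoint L ∘L A ∘L L) := by
  obtain ⟨α, hα, h⟩ := hA.exists_pos_mul_norm_sq_le_inner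
  obtain ⟨β, hβ, hLβ⟩ := hL
  refine of_pos_mul_norm_sq_le_inner (hA.isPositive.adjoint_conj L).isSelfAdjoint
    (by positivity : 0 < α * β ^ 2) fun x => ?_
  have hβx : β ^ 2 * ‖x‖ ^ 2 ≤ ‖L x‖ ^ 2 := by
    rw [← mul_pow]; exact pow_le_pow_left₀ (by positivity) (hLβ x) 2
  calc α * β ^ 2 * ‖x‖ ^ 2 ≤ α * ‖L x‖ ^ 2 := by rw [mul_assoc]; gcongr
    _ ≤ ⟪A (L x), L x⟫ := h (L x)
    _ = ⟪(adjoint L ∘L A ∘L L) x, x⟫ := (adjoint_inner_left L x (A (L x))).symm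

end StrictlyPos

theorem comp_le_parallel (L : H →L[ℝ] G) (hL : BoundedBelow L) (hL1 : ‖L‖ ≤ 1)
    (B : G →L[ℝ] G) (hB : StrictlyPos B) :
    Loewner ((adjoint L) ∘L B ∘L L)
      (((1 + Real.sqrt (‖B‖ * ‖Ring.inverse B‖)) ^ 2) • parallelComp L B) := by
  rcases subsingleton_or_nontrivial G with hG | hG
  · simp [Loewner, parallelComp, Subsingleton.elim B 0]
  set A := adjoint L ∘L Ring.inverse B ∘L L
  set M := ‖B‖
  set c := ‖Ring.inverse B‖
  have hA : StrictlyPos A := hB.inverse.adjoint_conj hL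
  have hP : (parallelComp L B).IsPositive := hA.isPositive.inverse hA.isUnit
  have hκ : 1 ≤ M * c := one_le_norm_mul_norm_inverse hB.isUnit
  refine loewner_of_inner_le (hB.isPositive.adjoint_conj L).isSelfAdjoint
    (hP.smul_of_nonneg (sq_nonneg _)).isSelfAdjoint fun x => ?_
  have hKant := hB.isPositive.norm_inverse_mul_inner_adjoint_conj_add_le hB.isUnit hL1 x
  have hAMGM := hA.isPositive.two_mul_mul_mul_norm_sq_le hA.isUnit (2 * M) (1 + M * c) x
  rw [show Ring.inverse A = parallelComp L B from rfl] at hAMGM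
  have hρ := one_add_sq_le_four_mul_mul_one_add_sqrt_sq hκ
  rw [smul_apply, real_inner_smul_left]
  refine le_of_mul_le_mul_left ?_ (by linarith : 0 < 4 * (M * c))
  calc 4 * (M * c) * ⟪(adjoint L ∘L B ∘L L) x, x⟫
        = 4 * M * (c * ⟪(adjoint L ∘L B ∘L L) x, x⟫) := by ring
    _ ≤ 4 * M * ((1 + M * c) * ‖x‖ ^ 2 - M * ⟪A x, x⟫) := by gcongr; linarith
    _ ≤ (1 + M * c) ^ 2 * ⟪parallelComp L B x, x⟫ := by linarith
    _ ≤ 4 * (M * c) * ((1 + √(M * c)) ^ 2 * ⟪parallelComp L B x, x⟫) := by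
        rw [← mul_assoc]; exact mul_le_mul_of_nonneg_right hρ (hP.inner_nonneg_left x)

end
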